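/- arXiv:1612.08921 — 2 statements merged into one kernel-verified Lean document; each statement's English description precedes it below -/
import Mathlib

section
/- Let 1 < p < ∞ and let Ω ⊆ ℝ^N be a bounded nonempty open set. Then the first Dirichlet eigenvalue of the p-Laplacian, λ₁ = inf of ∫_Ω |∇u|^p dx / ∫_Ω |u|^p dx over all nonzero C¹ functions u with compact support in Ω, is strictly positive. -/
/-!
Positivity of `λ₁` is the Poincaré inequality `∫ |u|^p ≤ C ∫ ‖∇u‖^p` for `C¹` functions supported
in the bounded set `Ω`. In dimension one, the fundamental theorem of calculus bounds `|u|` pointwise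
by the `L¹` norm of `u'` over an interval containing the support, and Hölder's inequality turns this
into an `Lᵖ` bound. In dimension `N ≥ 2`, the Gagliardo–Nirenberg–Sobolev inequality gives
`‖u‖_p ≤ C ‖Du‖_P` for an exponent `1 ≤ P ≤ p` with `P < N` and `1/P - 1/N ≤ 1/p`, and Hölder's
inequality on `Ω` gives `‖Du‖_P ≤ |Ω|^(1/P - 1/p) ‖Du‖_p`. A bump function supported in `Ω` makes
the set of Rayleigh quotients nonempty, so its infimum is at least `1/C`.
-/

open MeasureTheory Set

noncomputable section

/-- The first Dirichlet eigenvalue of the `p`-Laplacian on `Ω`: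
the infimum of the Rayleigh quotients over nonzero `C¹` functions compactly supported in `Ω`. -/
def lambda1 (N : ℕ) (p : ℝ) (Ω : Set (EuclideanSpace ℝ (Fin N))) : ℝ :=
  sInf {r : ℝ | ∃ u : EuclideanSpace ℝ (Fin N) → ℝ,
    ContDiff ℝ 1 u ∧ HasCompactSupport u ∧ tsupport u ⊆ Ω ∧ u ≠ 0 ∧
    r = (∫ x in Ω, ‖gradient u x‖ ^ p) / ∫ x in Ω, |u x| ^ p}

open Module Bornology
open scoped ENNReal NNReal

section OneDimensional

variable {F : Type*} [NormedAddCommGroup F] [NormedSpace ℝ F] [CompleteSpace F]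
  {v : ℝ → F} {a b : ℝ}

theorem enorm_le_setLIntegral_enorm_deriv (hv : ContDiff ℝ 1 v)
    (hsupp : Function.support v ⊆ Icc a b) (x : ℝ) :
    ‖v x‖ₑ ≤ ∫⁻ t in Icc a b, ‖deriv v t‖ₑ := by
  by_cases hx : x ∈ Icc a b
  swap
  · simp [Function.notMem_support.1 fun h => hx (hsupp h)]
  have hva : v a = 0 := by
    have hzero : Iio a ⊆ {t | v t = 0} := fun t ht =>
      Function.notMem_support.1 fun h => (hsupp h).1.not_gt ht
    exact (isClosed_eq hv.continuous continuous_const).closure_subset_iff.2 hzero (by simp)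
  have hftc : ∫ t in a..x, deriv v t = v x := by
    rw [intervalIntegral.integral_eq_sub_of_hasDerivAt
      (fun t _ => (hv.differentiable one_ne_zero t).hasDerivAt)
      ((hv.continuous_deriv le_rfl).intervalIntegrable a x), hva, sub_zero]
  calc ‖v x‖ₑ = ‖∫ t in Ioc a x, deriv v t‖ₑ := by
        rw [← intervalIntegral.integral_of_le hx.1, hftc]
    _ ≤ ∫⁻ t in Ioc a x, ‖deriv v t‖ₑ := enorm_integral_le_lintegral_enorm _
    _ ≤ ∫⁻ t in Icc a b, ‖deriv v t‖ₑ :=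
        lintegral_mono_set (Ioc_subset_Icc_self.trans (Icc_subset_Icc_right hx.2))

theorem eLpNorm_le_mul_eLpNorm_deriv_of_support_subset_Icc {p : ℝ≥0} (hp : 1 ≤ p)
    (hv : ContDiff ℝ 1 v) (hsupp : Function.support v ⊆ Icc a b) :
    eLpNorm v p volume ≤ ENNReal.ofReal (b - a) * eLpNorm (deriv v) p volume := by
  set μ := volume.restrict (Icc a b)
  have hμ : μ univ = ENNReal.ofReal (b - a) := by simp [μ]
  have hp1 : (1 : ℝ) ≤ p := hp
  calc eLpNorm v p volume = eLpNorm v p μ := (eLpNorm_restrict_eq_of_support_subset hsupp).symm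
    _ ≤ eLpNorm (deriv v) 1 μ * μ univ ^ (p : ℝ)⁻¹ := by
        refine eLpNorm_le_of_ae_enorm_bound (ae_of_all _ fun x => ?_)
        simpa [eLpNorm_one_eq_lintegral_enorm] using enorm_le_setLIntegral_enorm_deriv hv hsupp x
    _ ≤ eLpNorm (deriv v) p μ * μ univ ^ (1 - (p : ℝ)⁻¹) * μ univ ^ (p : ℝ)⁻¹ := by
        gcongr
        simpa using eLpNorm_le_eLpNorm_mul_rpow_measure_univ (p := 1) (q := p)
          (by exact_mod_cast hp) (hv.continuous_deriv le_rfl).aestronglyMeasurable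
    _ = eLpNorm (deriv v) p μ * μ univ := by
        rw [mul_assoc, ← ENNReal.rpow_add_of_nonneg _ _ (by simp [inv_le_one_of_one_le₀ hp1])
          (by positivity)]
        simp
    _ ≤ ENNReal.ofReal (b - a) * eLpNorm (deriv v) p volume := by
        rw [hμ, mul_comm]
        gcongr
        exact Measure.restrict_le_self

end OneDimensional

section InnerProductSpace

variable {E E' F : Type*} [NormedAddCommGroup E] [InnerProductSpace ℝ E] [FiniteDimensional ℝ E]
  [MeasurableSpace E] [BorelSpace E] [NormedAddCommGroup E'] [InnerProductSpace ℝ E']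
  [FiniteDimensional ℝ E'] [MeasurableSpace E'] [BorelSpace E'] [NormedAddCommGroup F]
  [NormedSpace ℝ F]

theorem eLpNorm_comp_linearIsometryEquiv {G : Type*} [NormedAddCommGroup G] (e : E ≃ₗᵢ[ℝ] E')
    {u : E' → G} (hu : Continuous u) (p : ℝ≥0∞) :
    eLpNorm (u ∘ e) p volume = eLpNorm u p volume :=
  eLpNorm_comp_measurePreserving hu.aestronglyMeasurable e.measurePreserving

theorem eLpNorm_fderiv_comp_linearIsometryEquiv (e : E ≃ₗᵢ[ℝ] E') {u : E' → F}
    (hu : ContDiff ℝ 1 u) (p : ℝ≥0∞) :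
    eLpNorm (fderiv ℝ (u ∘ e)) p volume = eLpNorm (fderiv ℝ u) p volume := by
  have hnorm (x : E) : ‖fderiv ℝ (u ∘ e) x‖ = ‖(fderiv ℝ u ∘ e) x‖ := by
    rw [show u ∘ e = u ∘ e.toContinuousLinearEquiv from rfl,
      e.toContinuousLinearEquiv.comp_right_fderiv]
    exact (fderiv ℝ u (e x)).opNorm_comp_linearIsometryEquiv e
  rw [eLpNorm_congr_norm_ae (ae_of_all _ hnorm)]
  exact eLpNorm_comp_linearIsometryEquiv e (hu.continuous_fderiv one_ne_zero) p

theorem exists_eLpNorm_le_mul_eLpNorm_fderiv_of_finrank_eq_one [CompleteSpace F]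
    (hE : finrank ℝ E = 1) {p : ℝ≥0} (hp : 1 ≤ p) {Ω : Set E} (hΩ : IsBounded Ω) :
    ∃ C : ℝ≥0, ∀ u : E → F, ContDiff ℝ 1 u → tsupport u ⊆ Ω →
      eLpNorm u p volume ≤ C * eLpNorm (fderiv ℝ u) p volume := by
  let e : ℝ ≃ₗᵢ[ℝ] E := (OrthonormalBasis.singleton (Fin 1) ℝ).equiv
    ((stdOrthonormalBasis ℝ E).reindex (finCongr hE)) (Equiv.refl _)
  obtain ⟨R, hR⟩ := hΩ.subset_closedBall 0
  refine ⟨(2 * R).toNNReal, fun u hu hsupp => ?_⟩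
  have hsupp_e : Function.support (u ∘ e) ⊆ Icc (-R) R := fun t ht => by
    have ht := hR (hsupp (subset_tsupport _ ht))
    rwa [Metric.mem_closedBall, dist_zero_right, e.norm_map, Real.norm_eq_abs, abs_le] at ht
  calc eLpNorm u p volume = eLpNorm (u ∘ e) p volume :=
        (eLpNorm_comp_linearIsometryEquiv e hu.continuous p).symm
    _ ≤ ENNReal.ofReal (R - -R) * eLpNorm (deriv (u ∘ e)) p volume :=
        eLpNorm_le_mul_eLpNorm_deriv_of_support_subset_Icc hp (hu.comp e.contDiff) hsupp_e
    _ = (2 * R).toNNReal * eLpNorm (fderiv ℝ u) p volume := by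
        rw [eLpNorm_congr_norm_ae (ae_of_all _ fun t => norm_deriv_eq_norm_fderiv),
          eLpNorm_fderiv_comp_linearIsometryEquiv e hu, sub_neg_eq_add, ← two_mul]
        rfl

end InnerProductSpace

theorem exists_sobolev_exponent_le {n : ℕ} (hn : 2 ≤ n) {p : ℝ≥0} (hp : 1 ≤ p) :
    ∃ P : ℝ≥0, 1 ≤ P ∧ P < n ∧ P ≤ p ∧ (P : ℝ)⁻¹ - (n : ℝ)⁻¹ ≤ (p : ℝ)⁻¹ := by
  have hn' : (2 : ℝ) ≤ n := by exact_mod_cast hn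
  have hp' : (1 : ℝ) ≤ p := hp
  have hpn : (0 : ℝ) < n + p := by positivity
  -- `p n / (n + p)` is the exponent whose Sobolev conjugate is `p`; it may be below 1.
  refine ⟨max 1 (p * n / (n + p)), le_max_left _ _, ?_, ?_, ?_⟩
  · rw [← NNReal.coe_lt_coe]
    push_cast
    refine max_lt (by linarith) ?_
    rw [div_lt_iff₀ hpn]
    nlinarith
  · rw [← NNReal.coe_le_coe]
    push_cast
    refine max_le hp' ?_
    rw [div_le_iff₀ hpn]
    nlinarith
  · have hinv : ((p * n / (n + p) : ℝ≥0) : ℝ)⁻¹ = (p : ℝ)⁻¹ + (n : ℝ)⁻¹ := by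
      push_cast
      field_simp
    have hle := inv_anti₀ (by positivity) (NNReal.coe_le_coe.2 (le_max_right 1 (p * n / (n + p))))
    linarith

theorem exists_eLpNorm_le_mul_eLpNorm_fderiv_of_two_le_finrank
    {E F : Type*} [NormedAddCommGroup E] [NormedSpace ℝ E] [FiniteDimensional ℝ E]
    [MeasurableSpace E] [BorelSpace E] [NormedAddCommGroup F] [NormedSpace ℝ F]
    [FiniteDimensional ℝ F] (μ : Measure E) [μ.IsAddHaarMeasure] (hE : 2 ≤ finrank ℝ E)
    {p : ℝ≥0} (hp : 1 ≤ p) {Ω : Set E} (hΩ : IsBounded Ω) :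
    ∃ C : ℝ≥0, ∀ u : E → F, ContDiff ℝ 1 u → tsupport u ⊆ Ω →
      eLpNorm u p μ ≤ C * eLpNorm (fderiv ℝ u) p μ := by
  obtain ⟨P, hP1, hPn, hPp, hPinv⟩ := exists_sobolev_exponent_le hE hp
  set D : ℝ≥0 := (μ Ω).toNNReal ^ ((P : ℝ)⁻¹ - (p : ℝ)⁻¹)
  refine ⟨eLpNormLESNormFDerivOfLeConst F μ Ω P p * D, fun u hu hsupp => ?_⟩
  have hDu : Function.support (fderiv ℝ u) ⊆ Ω := (support_fderiv_subset ℝ).trans hsupp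
  have hexp : 0 ≤ (P : ℝ)⁻¹ - (p : ℝ)⁻¹ := sub_nonneg.2 (inv_anti₀ (by positivity) hPp)
  have holder : eLpNorm (fderiv ℝ u) P μ ≤ eLpNorm (fderiv ℝ u) p μ * D := by
    calc eLpNorm (fderiv ℝ u) P μ = eLpNorm (fderiv ℝ u) P (μ.restrict Ω) :=
          (eLpNorm_restrict_eq_of_support_subset (ε := E →L[ℝ] F) hDu).symm
      _ ≤ eLpNorm (fderiv ℝ u) p (μ.restrict Ω) *
            μ.restrict Ω univ ^ (1 / (P : ℝ≥0∞).toReal - 1 / (p : ℝ≥0∞).toReal) :=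
          eLpNorm_le_eLpNorm_mul_rpow_measure_univ (by exact_mod_cast hPp)
            (hu.continuous_fderiv one_ne_zero).aestronglyMeasurable
      _ = eLpNorm (fderiv ℝ u) p μ * D := by
          rw [eLpNorm_restrict_eq_of_support_subset (ε := E →L[ℝ] F) hDu,
            Measure.restrict_apply_univ,
            ENNReal.coe_rpow_of_nonneg _ hexp, ENNReal.coe_toNNReal hΩ.measure_lt_top.ne]
          simp
  calc eLpNorm u p μ
      ≤ eLpNormLESNormFDerivOfLeConst F μ Ω P p * eLpNorm (fderiv ℝ u) P μ :=
        eLpNorm_le_eLpNorm_fderiv_of_le μ hu ((subset_tsupport u).trans hsupp) hP1 hPn hPinv hΩ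
    _ ≤ eLpNormLESNormFDerivOfLeConst F μ Ω P p * (eLpNorm (fderiv ℝ u) p μ * D) := by
        gcongr
    _ = (eLpNormLESNormFDerivOfLeConst F μ Ω P p * D : ℝ≥0) * eLpNorm (fderiv ℝ u) p μ := by
        push_cast
        ring

theorem exists_eLpNorm_le_mul_eLpNorm_fderiv
    {E F : Type*} [NormedAddCommGroup E] [InnerProductSpace ℝ E] [FiniteDimensional ℝ E]
    [MeasurableSpace E] [BorelSpace E] [NormedAddCommGroup F] [NormedSpace ℝ F]
    [FiniteDimensional ℝ F] (hE : 0 < finrank ℝ E) {p : ℝ≥0} (hp : 1 ≤ p) {Ω : Set E}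
    (hΩ : IsBounded Ω) :
    ∃ C : ℝ≥0, ∀ u : E → F, ContDiff ℝ 1 u → tsupport u ⊆ Ω →
      eLpNorm u p volume ≤ C * eLpNorm (fderiv ℝ u) p volume := by
  obtain hE | hE : finrank ℝ E = 1 ∨ 2 ≤ finrank ℝ E := by omega
  · have := FiniteDimensional.complete ℝ F
    exact exists_eLpNorm_le_mul_eLpNorm_fderiv_of_finrank_eq_one hE hp hΩ
  · exact exists_eLpNorm_le_mul_eLpNorm_fderiv_of_two_le_finrank volume hE hp hΩ

theorem integral_norm_rpow_le_of_eLpNorm_le {α G H : Type*} [MeasurableSpace α]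
    {μ : Measure α} [NormedAddCommGroup G] [NormedAddCommGroup H] {f : α → G} {g : α → H}
    {p : ℝ≥0} (hp : p ≠ 0) (hf : MemLp f p μ) (hg : MemLp g p μ) {C : ℝ≥0}
    (h : eLpNorm f p μ ≤ C * eLpNorm g p μ) :
    ∫ x, ‖f x‖ ^ (p : ℝ) ∂μ ≤ (C : ℝ) ^ (p : ℝ) * ∫ x, ‖g x‖ ^ (p : ℝ) ∂μ := by
  have hp0 : (p : ℝ) ≠ 0 := by positivity
  have hA : 0 ≤ ∫ x, ‖f x‖ ^ (p : ℝ) ∂μ := integral_nonneg fun _ => by positivity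
  have hB : 0 ≤ ∫ x, ‖g x‖ ^ (p : ℝ) ∂μ := integral_nonneg fun _ => by positivity
  rw [hf.eLpNorm_eq_integral_rpow_norm (ENNReal.coe_ne_zero.2 hp) ENNReal.coe_ne_top,
    hg.eLpNorm_eq_integral_rpow_norm (ENNReal.coe_ne_zero.2 hp) ENNReal.coe_ne_top] at h
  replace h : (∫ x, ‖f x‖ ^ (p : ℝ) ∂μ) ^ (p : ℝ)⁻¹
      ≤ C * (∫ x, ‖g x‖ ^ (p : ℝ) ∂μ) ^ (p : ℝ)⁻¹ := by
    rw [← ENNReal.ofReal_le_ofReal_iff (by positivity), ENNReal.ofReal_mul C.coe_nonneg,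
      ENNReal.ofReal_coe_nnreal]
    simpa using h
  calc ∫ x, ‖f x‖ ^ (p : ℝ) ∂μ = ((∫ x, ‖f x‖ ^ (p : ℝ) ∂μ) ^ (p : ℝ)⁻¹) ^ (p : ℝ) :=
        (Real.rpow_inv_rpow hA hp0).symm
    _ ≤ (C * (∫ x, ‖g x‖ ^ (p : ℝ) ∂μ) ^ (p : ℝ)⁻¹) ^ (p : ℝ) := by gcongr
    _ = (C : ℝ) ^ (p : ℝ) * ∫ x, ‖g x‖ ^ (p : ℝ) ∂μ := by
        rw [Real.mul_rpow C.coe_nonneg (by positivity), Real.rpow_inv_rpow hB hp0]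

theorem exists_pos_setIntegral_abs_rpow_le_mul_setIntegral_norm_gradient_rpow
    {E : Type*} [NormedAddCommGroup E] [InnerProductSpace ℝ E] [FiniteDimensional ℝ E]
    [MeasurableSpace E] [BorelSpace E] (hE : 0 < finrank ℝ E) {p : ℝ} (hp : 1 ≤ p) {Ω : Set E}
    (hΩ : IsBounded Ω) :
    ∃ C > 0, ∀ u : E → ℝ, ContDiff ℝ 1 u → HasCompactSupport u → tsupport u ⊆ Ω →
      ∫ x in Ω, |u x| ^ p ≤ C * ∫ x in Ω, ‖gradient u x‖ ^ p := by
  have hp' : (p.toNNReal : ℝ) = p := Real.coe_toNNReal p (by linarith)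
  obtain ⟨K, hK⟩ := exists_eLpNorm_le_mul_eLpNorm_fderiv (F := ℝ) hE
    (p := p.toNNReal) (by simpa using hp) hΩ
  refine ⟨((K + 1 : ℝ≥0) : ℝ) ^ p, by positivity, fun u hu hcs hsupp => ?_⟩
  have hgrad (x : E) : ‖gradient u x‖ = ‖fderiv ℝ u x‖ :=
    (InnerProductSpace.toDual ℝ E).symm.norm_map _
  have hDu : Function.support (fderiv ℝ u) ⊆ Ω := (support_fderiv_subset ℝ).trans hsupp
  have hbound : eLpNorm u p.toNNReal (volume.restrict Ω)
      ≤ (K + 1 : ℝ≥0) * eLpNorm (fderiv ℝ u) p.toNNReal (volume.restrict Ω) := by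
    rw [eLpNorm_restrict_eq_of_support_subset ((subset_tsupport u).trans hsupp),
      eLpNorm_restrict_eq_of_support_subset (ε := E →L[ℝ] ℝ) hDu]
    calc eLpNorm u p.toNNReal volume ≤ K * eLpNorm (fderiv ℝ u) p.toNNReal volume :=
          hK u hu hsupp
      _ ≤ (K + 1 : ℝ≥0) * eLpNorm (fderiv ℝ u) p.toNNReal volume := by gcongr; simp
  have := integral_norm_rpow_le_of_eLpNorm_le (Real.toNNReal_pos.2 (by linarith)).ne'
    ((hu.continuous.memLp_of_hasCompactSupport hcs).restrict Ω)
    (((hu.continuous_fderiv one_ne_zero).memLp_of_hasCompactSupport (hcs.fderiv ℝ)).restrict Ω)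
    hbound
  simpa only [hgrad, hp', Real.norm_eq_abs] using this

theorem setIntegral_abs_rpow_pos {X : Type*} [TopologicalSpace X] [MeasurableSpace X]
    [OpensMeasurableSpace X] {μ : Measure X} [μ.IsOpenPosMeasure] [IsFiniteMeasureOnCompacts μ]
    {u : X → ℝ} (hu : Continuous u) (hcs : HasCompactSupport u) {Ω : Set X}
    (hsupp : tsupport u ⊆ Ω) (hne : u ≠ 0) {p : ℝ} (hp : 0 < p) :
    0 < ∫ x in Ω, |u x| ^ p ∂μ := by
  obtain ⟨x, hx⟩ := Function.ne_iff.1 hne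
  rw [setIntegral_eq_integral_of_forall_compl_eq_zero fun y hy => by
    simp [image_eq_zero_of_notMem_tsupport fun h => hy (hsupp h), Real.zero_rpow hp.ne']]
  exact (hu.abs.rpow_const fun _ => Or.inr hp.le).integral_pos_of_hasCompactSupport_nonneg_nonzero
    (hcs.comp_left (g := fun t : ℝ => |t| ^ p) (by simp [Real.zero_rpow hp.ne']))
    (fun y => by positivity) (Real.rpow_pos_of_pos (abs_pos.2 hx) p).ne'

/-- The first Dirichlet eigenvalue of the `p`-Laplacian on a bounded nonempty open set
is strictly positive. -/
theorem lambda1_pos (N : ℕ) (p : ℝ) (Ω : Set (EuclideanSpace ℝ (Fin N)))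
    (hN : 0 < N) (hp : 1 < p)
    (hΩne : Ω.Nonempty) (hΩb : Bornology.IsBounded Ω) (hΩo : IsOpen Ω) :
    0 < lambda1 N p Ω := by
  obtain ⟨C, hC, hpoincare⟩ :=
    exists_pos_setIntegral_abs_rpow_le_mul_setIntegral_norm_gradient_rpow
      (by simpa using hN) hp.le hΩb
  obtain ⟨x₀, hx₀⟩ := hΩne
  obtain ⟨u₀, hu₀Ω, hu₀c, hu₀, -, hu₀x₀⟩ :=
    exists_contDiff_tsupport_subset (n := 1) (hΩo.mem_nhds hx₀)
  refine (inv_pos.2 hC).trans_le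
    (le_csInf ⟨_, u₀, hu₀, hu₀c, hu₀Ω, fun h => by simp [h] at hu₀x₀, rfl⟩ ?_)
  rintro _ ⟨u, hu, hcs, hsupp, hne, rfl⟩
  rw [le_div_iff₀ (setIntegral_abs_rpow_pos hu.continuous hcs hsupp hne (by linarith)),
    inv_mul_le_iff₀ hC]
  exact hpoincare u hu hcs hsupp
end
end

section
/- Let 1 < p < N, p* = Np/(N−p), let Ω ⊆ ℝ^N be a bounded nonempty open set, and let 0 < λ < λ₁ and μ > 0. Then for every C¹ function u with compact support in Ω, the modified energy satisfies I_μ(u) ≥ (1/p)(1 − λ/λ₁)(∫_Ω |∇u|^p dx) − (S^{−p*/p}/p*)(∫_Ω |∇u|^p dx)^{p*/p} − (1 − 1/p) μ |Ω|, where |Ω| is the Lebesgue measure of Ω. -/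
/-!
The three parts of `I_μ` are bounded separately. Since `u₊ ≤ |u|`, the `λ`-term is controlled
by the variational definition of `λ₁`, and the critical term by that of `S` once `S > 0` is known;
positivity of `S` comes from the Gagliardo–Nirenberg–Sobolev inequality, which bounds every
Sobolev quotient below by `C⁻ᵖ`. The truncated term has density at least `-(1 - 1/p)`: on
`{-1 < u < 0}` this is Bernoulli's inequality `s^p ≥ 1 + p (s - 1)` for `s = -u`, and the pieces
`{-1 < u < 0}` and `{u ≤ -1}` of `Ω` are disjoint.
-/

open MeasureTheory Set

noncomputable section

/-- The critical Sobolev exponent `p* = Np/(N-p)`. -/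
def pStar (N : ℕ) (p : ℝ) : ℝ := N * p / (N - p)

/-- The best Sobolev constant `S` on `ℝ^N`. -/
def sobolevS (N : ℕ) (p : ℝ) : ℝ :=
  sInf {r : ℝ | ∃ u : EuclideanSpace ℝ (Fin N) → ℝ,
    ContDiff ℝ 1 u ∧ HasCompactSupport u ∧ u ≠ 0 ∧
    r = (∫ x, ‖gradient u x‖ ^ p) / (∫ x, |u x| ^ pStar N p) ^ (p / pStar N p)}

/-- The modified energy functional `I_μ` associated with the truncated problem. -/
def modEnergy (N : ℕ) (p lam μ : ℝ) (Ω : Set (EuclideanSpace ℝ (Fin N)))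
    (u : EuclideanSpace ℝ (Fin N) → ℝ) : ℝ :=
  (∫ x in Ω, (‖gradient u x‖ ^ p / p - lam * max (u x) 0 ^ p / p
    - max (u x) 0 ^ pStar N p / pStar N p)) +
  μ * ((∫ x in Ω ∩ {x | 0 ≤ u x}, u x) +
    (∫ x in Ω ∩ {x | -1 < u x ∧ u x < 0}, (u x - |u x| ^ (p - 1) * u x / p)) -
    (1 - 1 / p) * (volume (Ω ∩ {x | u x ≤ -1})).toReal)

open scoped ENNReal

section Integrability

variable {X F : Type*} [TopologicalSpace X] [MeasurableSpace X] [OpensMeasurableSpace X]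
  {μ : Measure X} [IsFiniteMeasureOnCompacts μ]

lemma Continuous.integrable_comp_of_hasCompactSupport [TopologicalSpace F] [Zero F]
    {g : F → ℝ} {f : X → F} (hg : Continuous g) (hg0 : g 0 = 0) (hf : Continuous f)
    (hfs : HasCompactSupport f) : Integrable (fun x => g (f x)) μ :=
  (hg.comp hf).integrable_of_hasCompactSupport (hfs.comp_left hg0)

lemma integral_abs_rpow_pos [μ.IsOpenPosMeasure] {v : X → ℝ} {q : ℝ} (hq : 0 < q)
    (hv : Continuous v) (hvs : HasCompactSupport v) (hv0 : v ≠ 0) :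
    0 < ∫ x, |v x| ^ q ∂μ := by
  have hint : Integrable (fun x => |v x| ^ q) μ :=
    ((Real.continuous_rpow_const hq.le).comp continuous_abs).integrable_comp_of_hasCompactSupport
      (by simp [hq.ne']) hv hvs
  have hsupp : Function.support (fun x => |v x| ^ q) = Function.support v := by
    ext x
    simp [Real.rpow_eq_zero (abs_nonneg _) hq.ne']
  rw [integral_pos_iff_support_of_nonneg (fun x => by positivity) hint, hsupp]
  exact hv.isOpen_support.measure_pos μ (Function.support_nonempty_iff.2 hv0)

end Integrability

section Gradient

variable {𝕜 F : Type*} [RCLike 𝕜] [NormedAddCommGroup F] [InnerProductSpace 𝕜 F] [CompleteSpace F]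
  {f : F → 𝕜}

lemma norm_gradient_eq_norm_fderiv (f : F → 𝕜) (x : F) : ‖gradient f x‖ = ‖fderiv 𝕜 f x‖ :=
  (InnerProductSpace.toDual 𝕜 F).symm.norm_map _

lemma support_gradient_subset : Function.support (gradient f) ⊆ tsupport f := fun x hx =>
  support_fderiv_subset 𝕜 fun h => hx (by simp [gradient, h])

lemma HasCompactSupport.gradient (hf : HasCompactSupport f) : HasCompactSupport (gradient f) :=
  hf.mono' support_gradient_subset

lemma ContDiff.continuous_gradient (hf : ContDiff 𝕜 1 f) : Continuous (gradient f) :=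
  (InnerProductSpace.toDual 𝕜 F).symm.continuous.comp (hf.continuous_fderiv one_ne_zero)

end Gradient

lemma exists_contDiff_hasCompactSupport_ne_zero {E : Type*} [NormedAddCommGroup E]
    [NormedSpace ℝ E] [FiniteDimensional ℝ E] (n : ℕ∞) :
    ∃ v : E → ℝ, ContDiff ℝ n v ∧ HasCompactSupport v ∧ v ≠ 0 := by
  let b : ContDiffBump (0 : E) := ⟨1, 2, one_pos, one_lt_two⟩
  refine ⟨b, b.contDiff, b.hasCompactSupport, fun h => ?_⟩
  have := b.one_of_mem_closedBall (Metric.mem_closedBall_self zero_le_one)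
  simp [h] at this

section Sobolev

variable {N : ℕ} {p : ℝ}

lemma pStar_pos (hp : 0 < p) (hpN : p < N) : 0 < pStar N p := by
  have : 0 < (N : ℝ) - p := sub_pos.2 hpN
  have : 0 < (N : ℝ) := hp.trans hpN
  unfold pStar; positivity

lemma inv_pStar (hp : 0 < p) (hpN : p < N) : (pStar N p)⁻¹ = p⁻¹ - (N : ℝ)⁻¹ := by
  have : (N : ℝ) - p ≠ 0 := (sub_pos.2 hpN).ne'
  have : (N : ℝ) ≠ 0 := (hp.trans hpN).ne'
  unfold pStar
  field_simp

def gnsConst (N : ℕ) (p : ℝ) : ℝ :=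
  eLpNormLESNormFDerivOfEqInnerConst (volume : Measure (EuclideanSpace ℝ (Fin N))) p

lemma integral_abs_rpow_pStar_rpow_le_gnsConst (hp : 1 ≤ p) (hpN : p < N)
    {v : EuclideanSpace ℝ (Fin N) → ℝ} (hv : ContDiff ℝ 1 v) (hvs : HasCompactSupport v) :
    (∫ x, |v x| ^ pStar N p) ^ (p / pStar N p) ≤ gnsConst N p ^ p * ∫ x, ‖gradient v x‖ ^ p := by
  have hp0 : 0 < p := one_pos.trans_le hp
  have hpS := pStar_pos hp0 hpN
  have hgns := eLpNorm_le_eLpNorm_fderiv_of_eq_inner volume hv hvs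
    (p := p.toNNReal) (p' := (pStar N p).toNNReal) (by simpa using hp)
    (by simpa using hp0.trans hpN)
    (by simp [Real.coe_toNNReal _ hpS.le, Real.coe_toNNReal _ hp0.le, inv_pStar hp0 hpN])
  rw [(hv.continuous.memLp_of_hasCompactSupport hvs).eLpNorm_eq_integral_rpow_norm
      (by simpa using hpS) ENNReal.coe_ne_top,
    ((hv.continuous_fderiv one_ne_zero).memLp_of_hasCompactSupport
      (hvs.fderiv (𝕜 := ℝ))).eLpNorm_eq_integral_rpow_norm (by simpa using hp0) ENNReal.coe_ne_top]
    at hgns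
  simp only [ENNReal.coe_toReal, Real.coe_toNNReal _ hpS.le, Real.coe_toNNReal _ hp0.le,
    Real.norm_eq_abs, ← norm_gradient_eq_norm_fderiv] at hgns
  rw [← ENNReal.ofReal_coe_nnreal, ← ENNReal.ofReal_mul NNReal.zero_le_coe,
    ENNReal.ofReal_le_ofReal_iff (by positivity)] at hgns
  have hC : 0 ≤ gnsConst N p := NNReal.zero_le_coe
  calc (∫ x, |v x| ^ pStar N p) ^ (p / pStar N p)
      = ((∫ x, |v x| ^ pStar N p) ^ (pStar N p)⁻¹) ^ p := by
        rw [← Real.rpow_mul (by positivity), div_eq_inv_mul]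
    _ ≤ (gnsConst N p * (∫ x, ‖gradient v x‖ ^ p) ^ p⁻¹) ^ p := by gcongr; exact hgns
    _ = gnsConst N p ^ p * ∫ x, ‖gradient v x‖ ^ p := by
        rw [Real.mul_rpow hC (by positivity), ← Real.rpow_mul (by positivity),
          inv_mul_cancel₀ hp0.ne', Real.rpow_one]

lemma gnsConst_pos (hp : 1 ≤ p) (hpN : p < N) : 0 < gnsConst N p := by
  obtain ⟨v, hv, hvs, hv0⟩ :=
    exists_contDiff_hasCompactSupport_ne_zero (E := EuclideanSpace ℝ (Fin N)) 1
  have hP := integral_abs_rpow_pos (μ := volume) (pStar_pos (one_pos.trans_le hp) hpN)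
    hv.continuous hvs hv0
  have hgns := integral_abs_rpow_pStar_rpow_le_gnsConst hp hpN hv hvs
  refine lt_of_le_of_ne NNReal.zero_le_coe fun h => ?_
  rw [← h, Real.zero_rpow (one_pos.trans_le hp).ne', zero_mul] at hgns
  exact (Real.rpow_pos_of_pos hP _).not_ge hgns

lemma inv_gnsConst_rpow_le (hp : 1 ≤ p) (hpN : p < N) {v : EuclideanSpace ℝ (Fin N) → ℝ}
    (hv : ContDiff ℝ 1 v) (hvs : HasCompactSupport v) (hv0 : v ≠ 0) :
    (gnsConst N p ^ p)⁻¹ ≤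
      (∫ x, ‖gradient v x‖ ^ p) / (∫ x, |v x| ^ pStar N p) ^ (p / pStar N p) := by
  have hP := integral_abs_rpow_pos (μ := volume) (pStar_pos (one_pos.trans_le hp) hpN)
    hv.continuous hvs hv0
  have hC := gnsConst_pos hp hpN
  rw [le_div_iff₀ (by positivity), inv_mul_le_iff₀ (by positivity)]
  exact integral_abs_rpow_pStar_rpow_le_gnsConst hp hpN hv hvs

lemma sobolevS_pos (hp : 1 ≤ p) (hpN : p < N) : 0 < sobolevS N p := by
  obtain ⟨v, hv, hvs, hv0⟩ :=
    exists_contDiff_hasCompactSupport_ne_zero (E := EuclideanSpace ℝ (Fin N)) 1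
  have hC := gnsConst_pos hp hpN
  refine (inv_pos.2 (by positivity : 0 < gnsConst N p ^ p)).trans_le
    (le_csInf ⟨_, v, hv, hvs, hv0, rfl⟩ ?_)
  rintro r ⟨w, hw, hws, hw0, rfl⟩
  exact inv_gnsConst_rpow_le hp hpN hw hws hw0

lemma sobolevS_mul_rpow_le (hp : 1 ≤ p) (hpN : p < N) {v : EuclideanSpace ℝ (Fin N) → ℝ}
    (hv : ContDiff ℝ 1 v) (hvs : HasCompactSupport v) (hv0 : v ≠ 0) :
    sobolevS N p * (∫ x, |v x| ^ pStar N p) ^ (p / pStar N p) ≤ ∫ x, ‖gradient v x‖ ^ p := by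
  have hP := integral_abs_rpow_pos (μ := volume) (pStar_pos (one_pos.trans_le hp) hpN)
    hv.continuous hvs hv0
  rw [← le_div_iff₀ (by positivity)]
  exact csInf_le ⟨0, by rintro r ⟨w, -, -, -, rfl⟩; positivity⟩ ⟨v, hv, hvs, hv0, rfl⟩

theorem integral_abs_rpow_pStar_le (hp : 1 ≤ p) (hpN : p < N)
    {v : EuclideanSpace ℝ (Fin N) → ℝ} (hv : ContDiff ℝ 1 v) (hvs : HasCompactSupport v) :
    ∫ x, |v x| ^ pStar N p ≤
      sobolevS N p ^ (-(pStar N p) / p) * (∫ x, ‖gradient v x‖ ^ p) ^ (pStar N p / p) := by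
  have hp0 : 0 < p := one_pos.trans_le hp
  have hpS := pStar_pos hp0 hpN
  have hS := sobolevS_pos hp hpN
  rcases eq_or_ne v 0 with rfl | hv0
  · simp only [Pi.zero_apply, abs_zero, Real.zero_rpow hpS.ne', integral_zero]
    positivity
  have hP := integral_abs_rpow_pos (μ := volume) hpS hv.continuous hvs hv0
  calc ∫ x, |v x| ^ pStar N p
      = ((∫ x, |v x| ^ pStar N p) ^ (p / pStar N p)) ^ (pStar N p / p) := by
        rw [← Real.rpow_mul hP.le, div_mul_div_comm, mul_comm p, div_self (by positivity),
          Real.rpow_one]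
    _ ≤ ((∫ x, ‖gradient v x‖ ^ p) / sobolevS N p) ^ (pStar N p / p) := by
        gcongr
        rw [le_div_iff₀' hS]
        exact sobolevS_mul_rpow_le hp hpN hv hvs hv0
    _ = sobolevS N p ^ (-(pStar N p) / p) * (∫ x, ‖gradient v x‖ ^ p) ^ (pStar N p / p) := by
        rw [Real.div_rpow (by positivity) hS.le, neg_div, Real.rpow_neg hS.le, div_eq_inv_mul]

theorem setIntegral_abs_rpow_pStar_le (hp : 1 ≤ p) (hpN : p < N)
    {Ω : Set (EuclideanSpace ℝ (Fin N))} {v : EuclideanSpace ℝ (Fin N) → ℝ} (hv : ContDiff ℝ 1 v)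
    (hvs : HasCompactSupport v) (hsupp : tsupport v ⊆ Ω) :
    ∫ x in Ω, |v x| ^ pStar N p ≤
      sobolevS N p ^ (-(pStar N p) / p) * (∫ x in Ω, ‖gradient v x‖ ^ p) ^ (pStar N p / p) := by
  have hout {x} (hx : x ∉ Ω) : x ∉ tsupport v := fun h => hx (hsupp h)
  rw [setIntegral_eq_integral_of_forall_compl_eq_zero fun x hx => by
      simp [image_eq_zero_of_notMem_tsupport (hout hx), (pStar_pos (one_pos.trans_le hp) hpN).ne'],
    setIntegral_eq_integral_of_forall_compl_eq_zero fun x hx => by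
      simp [Function.notMem_support.1 fun h => hout hx (support_gradient_subset h),
        (one_pos.trans_le hp).ne']]
  exact integral_abs_rpow_pStar_le hp hpN hv hvs

end Sobolev

lemma lambda1_mul_setIntegral_le {N : ℕ} {p : ℝ} (hp : p ≠ 0)
    {Ω : Set (EuclideanSpace ℝ (Fin N))} {u : EuclideanSpace ℝ (Fin N) → ℝ} (hu : ContDiff ℝ 1 u)
    (hus : HasCompactSupport u) (hsupp : tsupport u ⊆ Ω) :
    lambda1 N p Ω * ∫ x in Ω, |u x| ^ p ≤ ∫ x in Ω, ‖gradient u x‖ ^ p := by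
  rcases (by positivity : (0 : ℝ) ≤ ∫ x in Ω, |u x| ^ p).eq_or_lt with hU | hU
  · rw [← hU, mul_zero]
    positivity
  have hu0 : u ≠ 0 := by
    rintro rfl
    simp [Real.zero_rpow hp] at hU
  rw [← le_div_iff₀ hU]
  exact csInf_le ⟨0, by rintro r ⟨w, -, -, -, -, rfl⟩; positivity⟩ ⟨u, hu, hus, hsupp, hu0, rfl⟩

section Energy

variable {E : Type*} [NormedAddCommGroup E] [InnerProductSpace ℝ E] [CompleteSpace E]
  [MeasurableSpace E] [BorelSpace E] {μ : Measure E} [IsFiniteMeasureOnCompacts μ]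

lemma setIntegral_energyDensity_ge {p q lam : ℝ} (hp : 0 < p) (hq : 0 < q) (hlam : 0 ≤ lam)
    {u : E → ℝ} (hu : ContDiff ℝ 1 u) (hus : HasCompactSupport u) (s : Set E) :
    (∫ x in s, ‖gradient u x‖ ^ p ∂μ) / p - lam * (∫ x in s, |u x| ^ p ∂μ) / p
        - (∫ x in s, |u x| ^ q ∂μ) / q ≤
      ∫ x in s, (‖gradient u x‖ ^ p / p - lam * max (u x) 0 ^ p / p - max (u x) 0 ^ q / q) ∂μ := by
  have hG : IntegrableOn (fun x => ‖gradient u x‖ ^ p) s μ :=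
    ((Real.continuous_rpow_const hp.le).comp continuous_norm).integrable_comp_of_hasCompactSupport
      (by simp [hp.ne']) hu.continuous_gradient hus.gradient |>.integrableOn
  have habs {r : ℝ} (hr : 0 < r) : IntegrableOn (fun x => |u x| ^ r) s μ :=
    ((Real.continuous_rpow_const hr.le).comp continuous_abs).integrable_comp_of_hasCompactSupport
      (by simp [hr.ne']) hu.continuous hus |>.integrableOn
  have hpos {r : ℝ} (hr : 0 < r) : IntegrableOn (fun x => max (u x) 0 ^ r) s μ :=
    ((Real.continuous_rpow_const hr.le).comp (continuous_id.max continuous_const)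
      ).integrable_comp_of_hasCompactSupport (by simp [hr.ne']) hu.continuous hus |>.integrableOn
  calc (∫ x in s, ‖gradient u x‖ ^ p ∂μ) / p - lam * (∫ x in s, |u x| ^ p ∂μ) / p
        - (∫ x in s, |u x| ^ q ∂μ) / q
      = ∫ x in s, (‖gradient u x‖ ^ p / p - lam * |u x| ^ p / p - |u x| ^ q / q) ∂μ := by
        rw [integral_sub _ ((habs hq).div_const q),
          integral_sub (hG.div_const p) (((habs hp).const_mul lam).div_const p),
          integral_div, integral_div, integral_div, integral_const_mul]
        exact (hG.div_const p).sub (((habs hp).const_mul lam).div_const p)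
    _ ≤ _ := by
        refine integral_mono (((hG.div_const p).sub (((habs hp).const_mul lam).div_const p)).sub
          ((habs hq).div_const q))
          (((hG.div_const p).sub (((hpos hp).const_mul lam).div_const p)).sub
            ((hpos hq).div_const q)) fun x => ?_
        dsimp only
        gcongr <;> exact max_le (le_abs_self _) (abs_nonneg _)

end Energy

lemma neg_one_sub_inv_le_sub_abs_rpow_mul_div {p t : ℝ} (hp : 1 ≤ p) (ht0 : t < 0) :
    -(1 - 1 / p) ≤ t - |t| ^ (p - 1) * t / p := by
  have hp0 : 0 < p := one_pos.trans_le hp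
  have hpow : |t| ^ (p - 1) * t = -(-t) ^ p := by
    rw [abs_of_neg ht0, Real.rpow_sub_one (neg_ne_zero.2 ht0.ne)]
    field_simp [ht0.ne]
  have hbern : 1 + p * (-t - 1) ≤ (-t) ^ p := by
    simpa using one_add_mul_self_le_rpow_one_add (s := -t - 1) (by linarith) hp
  have hlhs : (-(1 - 1 / p) - t) * p = 1 + p * (-t - 1) := by field_simp; ring
  rw [hpow, neg_div, sub_neg_eq_add, ← sub_le_iff_le_add', le_div_iff₀ hp0, hlhs]
  exact hbern

lemma neg_mul_measure_le_truncation {E : Type*} [TopologicalSpace E] [MeasurableSpace E]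
    [OpensMeasurableSpace E] {μ : Measure E} [IsFiniteMeasureOnCompacts μ] {p : ℝ} (hp : 1 ≤ p)
    {Ω : Set E} (hΩ : MeasurableSet Ω) (hΩμ : μ Ω ≠ ∞) {u : E → ℝ} (hu : Continuous u)
    (hus : HasCompactSupport u) :
    -((1 - 1 / p) * (μ Ω).toReal) ≤
      (∫ x in Ω ∩ {x | 0 ≤ u x}, u x ∂μ) +
        (∫ x in Ω ∩ {x | -1 < u x ∧ u x < 0}, (u x - |u x| ^ (p - 1) * u x / p) ∂μ) -
        (1 - 1 / p) * (μ (Ω ∩ {x | u x ≤ -1})).toReal := by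
  set A := Ω ∩ {x | -1 < u x ∧ u x < 0}
  set B := Ω ∩ {x | u x ≤ -1}
  have hA : MeasurableSet A := hΩ.inter
    ((measurableSet_lt measurable_const hu.measurable).inter
      (measurableSet_lt hu.measurable measurable_const))
  have hB : MeasurableSet B := hΩ.inter (measurableSet_le hu.measurable measurable_const)
  have hAμ : μ A ≠ ∞ := measure_ne_top_of_subset inter_subset_left hΩμ
  have hBμ : μ B ≠ ∞ := measure_ne_top_of_subset inter_subset_left hΩμ
  have hnonneg : 0 ≤ ∫ x in Ω ∩ {x | 0 ≤ u x}, u x ∂μ :=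
    setIntegral_nonneg (hΩ.inter (measurableSet_le measurable_const hu.measurable)) fun x hx => hx.2
  have hmid : -(1 - 1 / p) * μ.real A ≤ ∫ x in A, (u x - |u x| ^ (p - 1) * u x / p) ∂μ := by
    refine setIntegral_ge_of_const_le_real hA hAμ
      (fun x hx => neg_one_sub_inv_le_sub_abs_rpow_mul_div hp hx.2.2) ?_
    exact (continuous_id.sub ((((Real.continuous_rpow_const (by linarith)).comp continuous_abs).mul
      continuous_id).div_const p)).integrable_comp_of_hasCompactSupport (by simp) hu hus
      |>.integrableOn
  have hAB : μ.real A + μ.real B ≤ μ.real Ω := by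
    have hdisj : Disjoint A B :=
      disjoint_left.2 fun x hxA hxB => lt_irrefl (-1 : ℝ) (hxA.2.1.trans_le hxB.2)
    rw [← measureReal_union hdisj hB hAμ hBμ]
    exact measureReal_mono (union_subset inter_subset_left inter_subset_left) hΩμ
  have hc : 0 ≤ 1 - 1 / p := sub_nonneg.2 ((div_le_one (one_pos.trans_le hp)).2 hp)
  have := mul_le_mul_of_nonneg_left hAB hc
  simp only [measureReal_def] at hmid this
  linarith

theorem modEnergy_lower_bound_general
    (N : ℕ) (p lam μ : ℝ) (Ω : Set (EuclideanSpace ℝ (Fin N)))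
    (hp : 1 < p) (hpN : p < N)
    (hΩb : Bornology.IsBounded Ω) (hΩo : IsOpen Ω)
    (hlam : 0 < lam) (hlam1 : lam < lambda1 N p Ω) (hμ : 0 < μ)
    (u : EuclideanSpace ℝ (Fin N) → ℝ)
    (hu : ContDiff ℝ 1 u) (husupp : HasCompactSupport u) (hsupp : tsupport u ⊆ Ω) :
    modEnergy N p lam μ Ω u ≥
      (1 / p) * (1 - lam / lambda1 N p Ω) * (∫ x in Ω, ‖gradient u x‖ ^ p)
      - (sobolevS N p ^ (-(pStar N p) / p) / pStar N p) *
          (∫ x in Ω, ‖gradient u x‖ ^ p) ^ (pStar N p / p)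
      - (1 - 1 / p) * μ * (volume Ω).toReal := by
  have hp0 : 0 < p := one_pos.trans hp
  have hpS := pStar_pos hp0 hpN
  have hlambda1 : 0 < lambda1 N p Ω := hlam.trans hlam1
  set G := ∫ x in Ω, ‖gradient u x‖ ^ p
  have hpoincare : lam * (∫ x in Ω, |u x| ^ p) ≤ lam / lambda1 N p Ω * G :=
    calc lam * (∫ x in Ω, |u x| ^ p)
        = lam / lambda1 N p Ω * (lambda1 N p Ω * ∫ x in Ω, |u x| ^ p) := by field_simp
      _ ≤ lam / lambda1 N p Ω * G := by
          gcongr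
          exact lambda1_mul_setIntegral_le hp0.ne' hu husupp hsupp
  have hsobolev := setIntegral_abs_rpow_pStar_le hp.le hpN hu husupp hsupp
  have hdensity := setIntegral_energyDensity_ge (μ := volume) hp0 hpS hlam.le hu husupp Ω
  have htrunc := mul_le_mul_of_nonneg_left (neg_mul_measure_le_truncation (μ := volume) hp.le
    hΩo.measurableSet hΩb.measure_lt_top.ne hu.continuous husupp) hμ.le
  rw [modEnergy, ge_iff_le]
  calc _ = (G / p - lam / lambda1 N p Ω * G / p
          - sobolevS N p ^ (-(pStar N p) / p) * G ^ (pStar N p / p) / pStar N p)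
        + μ * -((1 - 1 / p) * (volume Ω).toReal) := by ring
    _ ≤ _ := add_le_add (by linarith [div_le_div_of_nonneg_right hpoincare hp0.le,
        div_le_div_of_nonneg_right hsobolev hpS.le]) htrunc

/-- Lower bound for the modified energy:
`I_μ(u) ≥ (1/p)(1 - λ/λ₁)‖u‖^p - (S^{-p*/p}/p*)‖u‖^{p*} - (1 - 1/p) μ |Ω|`. -/
theorem modEnergy_lower_bound
    (N : ℕ) (p lam μ : ℝ) (Ω : Set (EuclideanSpace ℝ (Fin N)))
    (hp : 1 < p) (hpN : p < N)
    (hΩne : Ω.Nonempty) (hΩb : Bornology.IsBounded Ω) (hΩo : IsOpen Ω)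
    (hlam : 0 < lam) (hlam1 : lam < lambda1 N p Ω) (hμ : 0 < μ)
    (u : EuclideanSpace ℝ (Fin N) → ℝ)
    (hu : ContDiff ℝ 1 u) (husupp : HasCompactSupport u) (hsupp : tsupport u ⊆ Ω) :
    modEnergy N p lam μ Ω u ≥
      (1 / p) * (1 - lam / lambda1 N p Ω) * (∫ x in Ω, ‖gradient u x‖ ^ p)
      - (sobolevS N p ^ (-(pStar N p) / p) / pStar N p) *
          (∫ x in Ω, ‖gradient u x‖ ^ p) ^ (pStar N p / p)
      - (1 - 1 / p) * μ * (volume Ω).toReal :=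
  modEnergy_lower_bound_general N p lam μ Ω hp hpN hΩb hΩo hlam hlam1 hμ u hu husupp hsupp
end
end
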